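/- Let (u_n) be a sequence in S^d with finite uniform covering parameter R_d(U, C) < ∞ for some C > 0. Then the spiral { n^{1/(d+1)}·u_n : n ≥ 1 } is a uniform orchard with visibility function V(ε) = C_U·ε^{−d} for some constant C_U > 0. -/

import Mathlib

/-!
The point `n^{1/(d+1)} u_n` has norm `n^{1/(d+1)}`, so spiral points at radius in `(b, T]` are
exactly those with index in `(b^{d+1}, T^{d+1}]`. For `T = b + L` with `L ≍ ε^{-d}` this window
has length at least `L T^d`, which exceeds `C N` for `N ≈ (R T / ε)^d`; the covering parameter then
gives an index in the window whose direction is within angle `R / N^{1/d} ≤ ε / T` of a prescribed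
direction `w`, hence a spiral point within `ε` of the ray `ℝ₊ w` at radius in `(b, b + L]`. Using
the rays through `v` and `-v`, every segment of length `3L` of the line `ℝ v` is `ε`-close to the
spiral.
-/

noncomputable section

def gdist {d : ℕ} (u v : EuclideanSpace ℝ (Fin (d+1))) : ℝ :=
  Real.arccos (inner ℝ u v)

def spiral {d : ℕ} (u : ℕ → EuclideanSpace ℝ (Fin (d+1))) :
    Set (EuclideanSpace ℝ (Fin (d+1))) :=
  {x | ∃ n : ℕ, 1 ≤ n ∧ x = ((n : ℝ) ^ ((1:ℝ)/((d:ℝ)+1))) • u n}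

def FiniteDensity {d : ℕ} (S : Set (EuclideanSpace ℝ (Fin (d+1)))) : Prop :=
  ∃ C > (0:ℝ), ∀ T ≥ (1:ℝ),
    ((S ∩ Metric.closedBall 0 T).ncard : ℝ) ≤ C * T ^ (d+1)

def IsUniformOrchard {d : ℕ} (O : Set (EuclideanSpace ℝ (Fin (d+1)))) (V : ℝ → ℝ) : Prop :=
  FiniteDensity O ∧
    ∀ ε ∈ Set.Ioo (0:ℝ) 1, ∀ t₀ : ℝ, ∀ v : EuclideanSpace ℝ (Fin (d+1)), ‖v‖ = 1 →
      ∃ o ∈ O, ∃ t : ℝ, t₀ < t ∧ t < t₀ + V ε ∧ ‖o - t • v‖ ≤ ε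

/-- Finiteness of the uniform covering parameter `R_d(U, C)`: there is `R`
such that for every direction `v`, every `m ≥ 0` and every `N ≥ 1`, some term
`u_{m+n}` with `1 ≤ n ≤ C·N` is within geodesic distance `R / N^{1/d}` of `v`. -/
def FiniteCoveringParameter {d : ℕ} (u : ℕ → EuclideanSpace ℝ (Fin (d+1))) (C : ℝ) : Prop :=
  ∃ R : ℝ, ∀ v : EuclideanSpace ℝ (Fin (d+1)), ‖v‖ = 1 → ∀ m : ℕ, ∀ N : ℕ, 1 ≤ N →
    ∃ n : ℕ, 1 ≤ n ∧ (n : ℝ) ≤ C * N ∧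
      gdist (u (m + n)) v ≤ R / (N : ℝ) ^ ((1:ℝ)/(d:ℝ))

open Real

theorem norm_sub_le_gdist {d : ℕ} {u v : EuclideanSpace ℝ (Fin (d+1))} (hu : ‖u‖ = 1)
    (hv : ‖v‖ = 1) : ‖u - v‖ ≤ gdist u v := by
  have hinner : |inner ℝ u v| ≤ 1 := by simpa [hu, hv] using abs_real_inner_le_norm u v
  have hcos : cos (gdist u v) = inner ℝ u v :=
    cos_arccos (neg_le_of_abs_le hinner) (le_of_abs_le hinner)
  have hsq : ‖u - v‖ ^ 2 ≤ gdist u v ^ 2 := by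
    have := one_sub_sq_div_two_le_cos (x := gdist u v)
    rw [norm_sub_sq_real, hu, hv]
    nlinarith
  exact (abs_le_of_sq_le_sq' hsq (arccos_nonneg _)).2

theorem Real.lt_rpow_one_div_iff {x y : ℝ} {k : ℕ} (hx : 0 ≤ x) (hy : 0 ≤ y) (hk : k ≠ 0) :
    x < y ^ (1 / (k : ℝ)) ↔ x ^ k < y := by
  rw [one_div, lt_rpow_inv_iff_of_pos hx hy (by positivity), rpow_natCast]

theorem Real.rpow_one_div_le_iff {x y : ℝ} {k : ℕ} (hx : 0 ≤ x) (hy : 0 ≤ y) (hk : k ≠ 0) :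
    x ^ (1 / (k : ℝ)) ≤ y ↔ x ≤ y ^ k := by
  rw [one_div, rpow_inv_le_iff_of_pos hx hy (by positivity), rpow_natCast]

theorem Real.le_rpow_one_div_iff {x y : ℝ} {k : ℕ} (hx : 0 ≤ x) (hy : 0 ≤ y) (hk : k ≠ 0) :
    x ≤ y ^ (1 / (k : ℝ)) ↔ x ^ k ≤ y := by
  rw [one_div, le_rpow_inv_iff_of_pos hx hy (by positivity), rpow_natCast]

def HasCoveringBound {d : ℕ} (u : ℕ → EuclideanSpace ℝ (Fin (d+1))) (C R : ℝ) : Prop :=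
  ∀ v : EuclideanSpace ℝ (Fin (d+1)), ‖v‖ = 1 → ∀ m : ℕ, ∀ N : ℕ, 1 ≤ N →
    ∃ n : ℕ, 1 ≤ n ∧ (n : ℝ) ≤ C * N ∧
      gdist (u (m + n)) v ≤ R / (N : ℝ) ^ ((1:ℝ)/(d:ℝ))

theorem exists_near_line_of_exists_near_ray {E : Type*} [SeminormedAddCommGroup E] [Module ℝ E]
    {O : Set E} {v : E} {L ε : ℝ} (hL : 0 < L)
    (hpos : ∀ b ≥ (0:ℝ), ∃ o ∈ O, ∃ s : ℝ, b < s ∧ s ≤ b + L ∧ ‖o - s • v‖ ≤ ε)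
    (hneg : ∀ b ≥ (0:ℝ), ∃ o ∈ O, ∃ s : ℝ, b < s ∧ s ≤ b + L ∧ ‖o - s • -v‖ ≤ ε) (t₀ : ℝ) :
    ∃ o ∈ O, ∃ t : ℝ, t₀ < t ∧ t < t₀ + 3 * L ∧ ‖o - t • v‖ ≤ ε := by
  by_cases ht₀ : -L ≤ t₀
  · obtain ⟨o, ho, s, hbs, hsb, hos⟩ := hpos (max t₀ 0) (le_max_right _ _)
    refine ⟨o, ho, s, (le_max_left _ _).trans_lt hbs, ?_, hos⟩
    have : max t₀ 0 ≤ t₀ + L := max_le (by linarith) (by linarith)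
    linarith
  · obtain ⟨o, ho, s, hbs, hsb, hos⟩ := hneg (max (-(t₀ + 3 * L)) 0) (le_max_right _ _)
    refine ⟨o, ho, -s, ?_, ?_, by rwa [neg_smul, ← smul_neg]⟩
    · have : max (-(t₀ + 3 * L)) 0 < -t₀ - L := max_lt (by linarith) (by linarith)
      linarith
    · linarith [le_max_left (-(t₀ + 3 * L)) 0]

section Spiral

variable {d : ℕ} {u : ℕ → EuclideanSpace ℝ (Fin (d+1))} {C R : ℝ}

theorem HasCoveringBound.mono {R' : ℝ} (h : HasCoveringBound u C R) (hRR' : R ≤ R') :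
    HasCoveringBound u C R' := by
  intro v hv m N hN
  obtain ⟨n, hn, hnN, hnv⟩ := h v hv m N hN
  have : (0:ℝ) < (N : ℝ) ^ ((1:ℝ)/(d:ℝ)) := rpow_pos_of_pos (by exact_mod_cast hN) _
  exact ⟨n, hn, hnN, hnv.trans (by gcongr)⟩

theorem FiniteCoveringParameter.exists_nonneg (h : FiniteCoveringParameter u C) :
    ∃ R, 0 ≤ R ∧ HasCoveringBound u C R := by
  obtain ⟨R, hR⟩ := h
  exact ⟨max R 0, le_max_right _ _, HasCoveringBound.mono hR (le_max_left _ _)⟩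

theorem window_length_le_pow_succ {ε b T : ℝ} (hC : 0 ≤ C) (hR : 0 ≤ R) (hε : 0 < ε)
    (hε1 : ε ≤ 1) (hb : 0 ≤ b) (hT : b + (C * R ^ d + 2 * C + 1) / ε ^ d ≤ T) :
    b ^ (d+1) + 1 + C * ((R * T / ε) ^ d + 2) ≤ T ^ (d+1) := by
  set A := C * R ^ d + 2 * C + 1
  have hεd : 0 < ε ^ d := pow_pos hε d
  have hA : 1 ≤ A / ε ^ d := by
    rw [le_div_iff₀ hεd]
    nlinarith [pow_le_one₀ hε.le hε1 (n := d), pow_nonneg hR d]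
  have hbT : b ≤ T := by linarith
  have hTd : 0 ≤ T ^ d := pow_nonneg (hb.trans hbT) d
  have hq : 1 ≤ T ^ d / ε ^ d := by
    rw [le_div_iff₀ hεd, one_mul]
    exact pow_le_pow_left₀ hε.le (by linarith) d
  calc b ^ (d+1) + 1 + C * ((R * T / ε) ^ d + 2)
      = b * b ^ d + C * R ^ d * (T ^ d / ε ^ d) + (2 * C + 1) := by rw [div_pow, mul_pow]; ring
    _ ≤ b * T ^ d + C * R ^ d * (T ^ d / ε ^ d) + (2 * C + 1) * (T ^ d / ε ^ d) := by
        gcongr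
        · exact le_mul_of_one_le_right (by positivity) hq
    _ = T ^ d * (b + A / ε ^ d) := by ring
    _ ≤ T ^ (d+1) := by rw [pow_succ]; gcongr


theorem HasCoveringBound.exists_index (h : HasCoveringBound u C R) (hd : d ≠ 0) (hC : 0 ≤ C)
    (hR : 0 ≤ R) {ε b T : ℝ} (hε : 0 < ε) (hb : 0 ≤ b) (hT : 0 < T)
    (hwindow : b ^ (d+1) + 1 + C * ((R * T / ε) ^ d + 2) ≤ T ^ (d+1))
    {w : EuclideanSpace ℝ (Fin (d+1))} (hw : ‖w‖ = 1) :
    ∃ n : ℕ, 1 ≤ n ∧ b ^ (d+1) < n ∧ (n : ℝ) ≤ T ^ (d+1) ∧ gdist (u n) w ≤ ε / T := by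
  set K := (R * T / ε) ^ d
  set m := ⌈b ^ (d+1)⌉₊
  -- the `+ 1` keeps `N ≥ 1` even when `R = 0`
  set N := ⌈K⌉₊ + 1
  obtain ⟨k, hk, hkN, hkw⟩ := h w hw m N (by omega)
  have hm : b ^ (d+1) ≤ m := Nat.le_ceil _
  have hm' : (m : ℝ) < b ^ (d+1) + 1 := Nat.ceil_lt_add_one (by positivity)
  have hKN : K ≤ N := by push_cast [N]; linarith [Nat.le_ceil K]
  have hNK : (N : ℝ) ≤ K + 2 := by
    push_cast [N]; linarith [Nat.ceil_lt_add_one (by positivity : 0 ≤ K)]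
  have hk1 : (1 : ℝ) ≤ k := by exact_mod_cast hk
  refine ⟨m + k, by omega, by push_cast; linarith, ?_, ?_⟩
  · push_cast
    nlinarith [mul_le_mul_of_nonneg_left hNK hC]
  · have hroot : R * T / ε ≤ (N : ℝ) ^ ((1:ℝ)/(d:ℝ)) :=
      (Real.le_rpow_one_div_iff (by positivity) N.cast_nonneg hd).2 hKN
    have hNpos : (0:ℝ) < (N : ℝ) ^ ((1:ℝ)/(d:ℝ)) := rpow_pos_of_pos (by positivity) _
    refine hkw.trans ?_
    rw [div_le_div_iff₀ hNpos hT]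
    rwa [div_le_iff₀' hε] at hroot

theorem HasCoveringBound.exists_spiral_near_ray (h : HasCoveringBound u C R)
    (hu : ∀ n, ‖u n‖ = 1) (hd : d ≠ 0) (hC : 0 ≤ C) (hR : 0 ≤ R) {ε : ℝ} (hε : 0 < ε)
    (hε1 : ε ≤ 1) {w : EuclideanSpace ℝ (Fin (d+1))} (hw : ‖w‖ = 1) {b : ℝ} (hb : 0 ≤ b) :
    ∃ o ∈ spiral u, ∃ s : ℝ, b < s ∧ s ≤ b + (C * R ^ d + 2 * C + 1) / ε ^ d ∧
      ‖o - s • w‖ ≤ ε := by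
  set T := b + (C * R ^ d + 2 * C + 1) / ε ^ d
  have hT : 0 < T := by positivity
  obtain ⟨n, hn, hbn, hnT, hnw⟩ :=
    h.exists_index hd hC hR hε hb hT (window_length_le_pow_succ hC hR hε hε1 hb le_rfl) hw
  have hsT : (n : ℝ) ^ ((1:ℝ)/((d:ℝ)+1)) ≤ T := by
    rw [← Nat.cast_succ, Real.rpow_one_div_le_iff n.cast_nonneg hT.le d.succ_ne_zero]
    exact hnT
  have hbs : b < (n : ℝ) ^ ((1:ℝ)/((d:ℝ)+1)) := by
    rw [← Nat.cast_succ, Real.lt_rpow_one_div_iff hb n.cast_nonneg d.succ_ne_zero]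
    exact hbn
  set s := (n : ℝ) ^ ((1:ℝ)/((d:ℝ)+1))
  refine ⟨s • u n, ⟨n, hn, rfl⟩, s, hbs, hsT, ?_⟩
  calc ‖s • u n - s • w‖ = s * ‖u n - w‖ := by
        rw [← smul_sub, norm_smul, Real.norm_of_nonneg (by positivity)]
    _ ≤ T * (ε / T) := by
        gcongr
        exact (norm_sub_le_gdist (hu n) hw).trans hnw
    _ = ε := mul_div_cancel₀ ε hT.ne'

theorem finiteDensity_spiral (hu : ∀ n, ‖u n‖ = 1) : FiniteDensity (spiral u) := by
  refine ⟨1, one_pos, fun T hT => ?_⟩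
  set M := ⌊T ^ (d+1)⌋₊
  have hsub : spiral u ∩ Metric.closedBall 0 T ⊆
      ((Finset.Icc 1 M).image fun n : ℕ => ((n : ℝ) ^ ((1:ℝ)/((d:ℝ)+1))) • u n : Set _) := by
    rintro _ ⟨⟨n, hn, rfl⟩, hnT⟩
    rw [mem_closedBall_zero_iff, norm_smul, hu n, mul_one, Real.norm_of_nonneg (by positivity),
      ← Nat.cast_succ, Real.rpow_one_div_le_iff n.cast_nonneg (by positivity) d.succ_ne_zero]
      at hnT
    simpa using ⟨n, ⟨hn, Nat.le_floor hnT⟩, rfl⟩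
  calc ((spiral u ∩ Metric.closedBall 0 T).ncard : ℝ)
      ≤ ((Finset.Icc 1 M).image fun n : ℕ => ((n : ℝ) ^ ((1:ℝ)/((d:ℝ)+1))) • u n).card := by
        rw [← Set.ncard_coe_finset]
        exact_mod_cast Set.ncard_le_ncard hsub (Finset.finite_toSet _)
    _ ≤ M := by exact_mod_cast Finset.card_image_le.trans (by simp)
    _ ≤ 1 * T ^ (d+1) := by rw [one_mul]; exact Nat.floor_le (by positivity)

end Spiral

theorem finite_covering_param_uniform_orchard (d : ℕ) (hd : 1 ≤ d)
    (u : ℕ → EuclideanSpace ℝ (Fin (d+1))) (hu : ∀ n, ‖u n‖ = 1)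
    (C : ℝ) (hC : 0 < C) (hR : FiniteCoveringParameter u C) :
    ∃ CU > (0:ℝ), IsUniformOrchard (spiral u) (fun ε => CU * ε ^ (-(d:ℝ))) := by
  obtain ⟨R, hR0, hRu⟩ := hR.exists_nonneg
  set A := C * R ^ d + 2 * C + 1
  refine ⟨3 * A, by positivity, finiteDensity_spiral hu, fun ε ⟨hε, hε1⟩ t₀ v hv => ?_⟩
  have hV : 3 * A * ε ^ (-(d:ℝ)) = 3 * (A / ε ^ d) := by
    rw [rpow_neg hε.le, rpow_natCast]; ring
  beta_reduce
  rw [hV]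
  have hd0 : d ≠ 0 := by omega
  exact exists_near_line_of_exists_near_ray (by positivity)
    (fun b hb => hRu.exists_spiral_near_ray hu hd0 hC.le hR0 hε hε1.le hv hb)
    (fun b hb => hRu.exists_spiral_near_ray hu hd0 hC.le hR0 hε hε1.le (by rwa [norm_neg]) hb)
    t₀
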